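/- No voting rule that is a distribution over unilaterals is probabilistically Condorcet consistent with any gap δ > 0 (for m ≥ 2 alternatives and n ≥ 2(3/(2δ)+1) voters). In particular, no randomized positional scoring rule is probabilistically Condorcet consistent. -/

import Mathlib

/-!
A distribution over unilaterals is linear in the profile: `f π x = ∑ τ, π τ * g τ x` with
`g τ x ∈ [0, 1]`. Put weight `p` slightly above `1/2` on a ranking with `0` on top and `1 - p` on
the transposition `(0 1)`, which has `1` on top; the majority ranking's top alternative is then a
Condorcet winner. Swapping the two weights swaps the Condorcet winner, and adding the two
inequalities demanded by a gap `δ` leaves `2δ ≤ 2(2p - 1)`, false for `p` close to `1/2`.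
A randomized positional scoring rule is the distribution over the unilaterals "pick the alternative
in position `j`" with weights `s j / ∑ s`.
-/

open Finset

attribute [local instance] Classical.propDecidable

/-- Rankings (linear orders) over `m` alternatives, as permutations of `Fin m`;
`σ a` is the position of alternative `a` (position `0` is the top). -/
abbrev Rk (m : ℕ) := Equiv.Perm (Fin m)

/-- `π` is a distribution (an anonymous vote profile when `α = Rk m`). -/
def IsDist {α : Type*} [Fintype α] (π : α → ℝ) : Prop :=
  (∀ x, 0 ≤ π x) ∧ ∑ x, π x = 1

/-- Total fraction of weight in `π` preferring `a` to `b`. -/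
noncomputable def prefW {m : ℕ} (π : Rk m → ℝ) (a b : Fin m) : ℝ :=
  ∑ σ : Rk m, if σ a < σ b then π σ else 0

/-- `a` beats `b` in a pairwise majority contest under `π`. -/
def Beats {m : ℕ} (π : Rk m → ℝ) (a b : Fin m) : Prop := 1 / 2 < prefW π a b

/-- `a` ties `b` in a pairwise majority contest under `π`. -/
def TiesW {m : ℕ} (π : Rk m → ℝ) (a b : Fin m) : Prop := prefW π a b = 1 / 2

/-- The Copeland score of alternative `a` under profile `π`. -/
noncomputable def cscore {m : ℕ} (π : Rk m → ℝ) (a : Fin m) : ℝ :=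
  ((Finset.univ.filter fun b => b ≠ a ∧ Beats π a b).card : ℝ)
    + (1 / 2) * ((Finset.univ.filter fun b => b ≠ a ∧ TiesW π a b).card : ℝ)

/-- `a` is a Condorcet winner in `π`. -/
def CondorcetWinner {m : ℕ} (π : Rk m → ℝ) (a : Fin m) : Prop :=
  ∀ b, b ≠ a → Beats π a b

/-- The anonymous vote profile induced by weights `w` on vote profile `σ`. -/
noncomputable def anonProfile {n m : ℕ} (σ : Fin n → Rk m) (w : Fin n → ℝ) :
    Rk m → ℝ :=
  fun τ => (∑ i, if σ i = τ then w i else 0) / (∑ i, w i)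

/-- Expected loss of the alternative chosen by rule `f`: `L_f(π, ℓ) = f(π)·ℓ`. -/
noncomputable def expLoss {m : ℕ} (f : (Rk m → ℝ) → Fin m → ℝ)
    (π : Rk m → ℝ) (ℓ : Fin m → ℝ) : ℝ :=
  ∑ a, f π a * ℓ a

/-- `f` is probabilistically Condorcet consistent with gap `δ`: whenever `a` is a
Condorcet winner, `f(π)_a ≥ f(π)_x + δ` for every other alternative `x`. -/
def ProbCondorcetConsistent {m : ℕ} (f : (Rk m → ℝ) → Fin m → ℝ) (δ : ℝ) : Prop :=
  ∀ π : Rk m → ℝ, IsDist π → ∀ a, CondorcetWinner π a →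
    ∀ x, x ≠ a → f π x + δ ≤ f π a

/-- `f` is a distribution over unilateral rules. -/
def DistOverUnilaterals {m : ℕ} (f : (Rk m → ℝ) → Fin m → ℝ) : Prop :=
  ∃ (k : ℕ) (q : Fin k → ℝ) (h : Fin k → Rk m → Fin m),
    (∀ j, 0 ≤ q j) ∧ (∑ j, q j = 1) ∧
    ∀ π a, f π a = ∑ j, q j * ∑ τ : Rk m, π τ * (if h j τ = a then 1 else 0)

/-- The randomized positional scoring rule with score vector `s`: each alternative is
chosen with probability proportional to its `s`-score. -/
noncomputable def randScoringRule {m : ℕ} (s : Fin m → ℝ) :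
    (Rk m → ℝ) → Fin m → ℝ :=
  fun π a => (∑ σ : Rk m, π σ * s (σ a)) / ∑ j, s j

section PairProfile

variable {α : Type*} [DecidableEq α]

def pairProfile (x y : α) (p : ℝ) : α → ℝ :=
  fun z => (if z = x then p else 0) + (if z = y then 1 - p else 0)

theorem pairProfile_nonneg {p : ℝ} (hp0 : 0 ≤ p) (hp1 : p ≤ 1) (x y z : α) :
    0 ≤ pairProfile x y p z := by
  unfold pairProfile
  split_ifs <;> linarith

theorem isDist_pairProfile [Fintype α] {p : ℝ} (hp0 : 0 ≤ p) (hp1 : p ≤ 1) (x y : α) :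
    IsDist (pairProfile x y p) :=
  ⟨pairProfile_nonneg hp0 hp1 x y, by simp [pairProfile, sum_add_distrib]⟩

theorem pairProfile_apply_left {x y : α} (hxy : x ≠ y) (p : ℝ) : pairProfile x y p x = p := by
  simp [pairProfile, hxy]

theorem sum_pairProfile_mul [Fintype α] (x y : α) (p : ℝ) (F : α → ℝ) :
    ∑ z, pairProfile x y p z * F z = p * F x + (1 - p) * F y := by
  simp [pairProfile, add_mul, sum_add_distrib, ite_mul]

end PairProfile

variable {m : ℕ}

theorem condorcetWinner_of_half_lt {π : Rk m → ℝ} (hπ : ∀ τ, 0 ≤ π τ) {σ : Rk m} {a : Fin m}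
    (htop : ∀ c, c ≠ a → σ a < σ c) (hmaj : 1 / 2 < π σ) : CondorcetWinner π a := by
  intro c hc
  calc 1 / 2 < π σ := hmaj
    _ = if σ a < σ c then π σ else 0 := (if_pos (htop c hc)).symm
    _ ≤ prefW π a c :=
      single_le_sum (f := fun τ : Rk m => if τ a < τ c then π τ else 0)
        (fun τ _ => by split_ifs <;> simp [hπ τ]) (mem_univ σ)

theorem lt_apply_of_apply_eq_zero [NeZero m] {σ : Rk m} {a c : Fin m} (ha : σ a = 0)
    (hc : c ≠ a) : σ a < σ c := by
  rw [ha, Fin.pos_iff_ne_zero, ← ha]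
  exact σ.injective.ne hc

theorem not_probCondorcetConsistent_of_eq_sum_mul (hm : 2 ≤ m) {δ : ℝ} (hδ : 0 < δ)
    {f : (Rk m → ℝ) → Fin m → ℝ} (g : Rk m → Fin m → ℝ)
    (hg0 : ∀ τ x, 0 ≤ g τ x) (hg1 : ∀ τ x, g τ x ≤ 1)
    (hf : ∀ π x, f π x = ∑ τ, π τ * g τ x) :
    ¬ ProbCondorcetConsistent f δ := by
  obtain ⟨k, rfl⟩ : ∃ k, m = k + 2 := ⟨m - 2, by omega⟩
  intro hcc
  set σ' : Rk (k + 2) := Equiv.swap 0 1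
  have htop : ∀ c, c ≠ 0 → (1 : Rk (k + 2)) 0 < (1 : Rk (k + 2)) c :=
    fun c => lt_apply_of_apply_eq_zero rfl
  have htop' : ∀ c, c ≠ 1 → σ' 1 < σ' c :=
    fun c => lt_apply_of_apply_eq_zero (Equiv.swap_apply_right 0 1)
  have hσσ' : (1 : Rk (k + 2)) ≠ σ' := fun h => by
    simpa [σ'] using congrArg (· 0) h
  set e := min δ 1 / 2
  have he0 : 0 < e := by positivity
  have heδ : e ≤ δ / 2 := by have := min_le_left δ 1; simp only [e]; linarith
  have he1 : e ≤ 1 / 2 := by have := min_le_right δ 1; simp only [e]; linarith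
  set p := 1 / 2 + e / 2
  have hp0 : 0 ≤ p := by positivity
  have hp1 : p ≤ 1 := by simp only [p]; linarith
  have hmaj : 1 / 2 < p := by simp only [p]; linarith
  have h01 : (0 : Fin (k + 2)) ≠ 1 := by simp
  have h₁ := hcc _ (isDist_pairProfile hp0 hp1 1 σ') 0
    (condorcetWinner_of_half_lt (pairProfile_nonneg hp0 hp1 1 σ') htop
      (by rwa [pairProfile_apply_left hσσ']))
    1 h01.symm
  have h₂ := hcc _ (isDist_pairProfile hp0 hp1 σ' 1) 1
    (condorcetWinner_of_half_lt (pairProfile_nonneg hp0 hp1 σ' 1) htop'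
      (by rwa [pairProfile_apply_left hσσ'.symm]))
    0 h01
  simp only [hf, sum_pairProfile_mul, p] at h₁ h₂
  -- adding `h₁` and `h₂` gives `2δ ≤ e * (g 1 0 - g 1 1 + g σ' 1 - g σ' 0) ≤ 2e`
  have hbracket : g 1 0 - g 1 1 + g σ' 1 - g σ' 0 ≤ 2 := by
    linarith [hg1 1 0, hg0 1 1, hg1 σ' 1, hg0 σ' 0]
  nlinarith [mul_le_mul_of_nonneg_left hbracket he0.le]

theorem DistOverUnilaterals.not_probCondorcetConsistent {f : (Rk m → ℝ) → Fin m → ℝ}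
    (hf : DistOverUnilaterals f) (hm : 2 ≤ m) {δ : ℝ} (hδ : 0 < δ) :
    ¬ ProbCondorcetConsistent f δ := by
  obtain ⟨k, q, h, hq0, hq1, hfq⟩ := hf
  refine not_probCondorcetConsistent_of_eq_sum_mul hm hδ
    (fun τ x => ∑ j, q j * if h j τ = x then 1 else 0) ?_ ?_ ?_
  · exact fun τ x => sum_nonneg fun j _ => mul_nonneg (hq0 j) (by split_ifs <;> norm_num)
  · exact fun τ x => (sum_le_sum fun j _ =>
      mul_le_of_le_one_right (hq0 j) (by split_ifs <;> norm_num)).trans hq1.le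
  · intro π x
    simp only [hfq, mul_sum]
    rw [sum_comm]
    exact sum_congr rfl fun τ _ => sum_congr rfl fun j _ => by ring

theorem randScoringRule_distOverUnilaterals {s : Fin m → ℝ} (hs0 : ∀ i, 0 ≤ s i)
    (hs : 0 < ∑ i, s i) : DistOverUnilaterals (randScoringRule s) := by
  refine ⟨m, fun j => s j / ∑ i, s i, fun j τ => τ.symm j,
    fun j => div_nonneg (hs0 j) hs.le, by rw [← sum_div, div_self hs.ne'], fun π a => ?_⟩
  simp only [randScoringRule, mul_sum, Equiv.symm_apply_eq, sum_div]
  rw [sum_comm]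
  refine sum_congr rfl fun τ _ => ?_
  simp [mul_div_assoc, mul_comm]

theorem distOverUnilaterals_not_condorcet_consistent_general (m : ℕ) (hm : 2 ≤ m)
    (δ : ℝ) (hδ : 0 < δ) :
    (∀ f : (Rk m → ℝ) → Fin m → ℝ,
        DistOverUnilaterals f → ¬ ProbCondorcetConsistent f δ) ∧
    (∀ s : Fin m → ℝ, (∀ i, 0 ≤ s i) → (∀ i j : Fin m, i ≤ j → s j ≤ s i) →
        0 < ∑ i, s i → ¬ ProbCondorcetConsistent (randScoringRule s) δ) :=
  ⟨fun _ hf => hf.not_probCondorcetConsistent hm hδ,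
    fun _ hs0 _ hs => (randScoringRule_distOverUnilaterals hs0 hs).not_probCondorcetConsistent hm hδ⟩

/-- For `m ≥ 2` alternatives (and `n ≥ 2(3/(2δ)+1)` voters), no
voting rule that is a distribution over unilaterals is probabilistically Condorcet
consistent with any gap `δ > 0`; in particular, no randomized positional scoring rule
is probabilistically Condorcet consistent. -/
theorem distOverUnilaterals_not_condorcet_consistent (m n : ℕ) (hm : 2 ≤ m)
    (δ : ℝ) (hδ : 0 < δ) (hn : 2 * (3 / (2 * δ) + 1) ≤ (n : ℝ)) :
    (∀ f : (Rk m → ℝ) → Fin m → ℝ,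
        DistOverUnilaterals f → ¬ ProbCondorcetConsistent f δ) ∧
    (∀ s : Fin m → ℝ, (∀ i, 0 ≤ s i) → (∀ i j : Fin m, i ≤ j → s j ≤ s i) →
        0 < ∑ i, s i → ¬ ProbCondorcetConsistent (randScoringRule s) δ) :=
  distOverUnilaterals_not_condorcet_consistent_general m hm δ hδ
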